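/- arXiv:1603.03075 — 3 statements merged into one kernel-verified Lean document; each statement's English description precedes it below -/
import Mathlib

section
/- Let T be a set and Q : T × T → ℂ. For π ∈ S_n and t = (t_1,…,t_n) ∈ T^n define Q_π(t) := ∏_{1 ≤ i < j ≤ n, π(i) > π(j)} Q(t_i, t_j). If ρ = π_l ∘ η is a reduced expression (i.e., |ρ| = |η| + 1, where |·| denotes the number of inversions and π_l = (l, l+1)), then Q_ρ(t) = Q(t_{η^{-1}(l)}, t_{η^{-1}(l+1)}) · Q_η(t) for all t ∈ T^n. -/
/-!
Left multiplication by the transposition of two adjacent values `i ⋖ j` only changes the relative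
order of the two positions `σ⁻¹ i` and `σ⁻¹ j`. So if `σ⁻¹ i < σ⁻¹ j`, the inversion set of
`swap i j * σ` is that of `σ` plus the single pair `(σ⁻¹ i, σ⁻¹ j)`; in the opposite case it loses
that pair. Hence the length goes up by one exactly in the first case, and then `Q_ρ` picks up
exactly the factor indexed by that pair.
-/

/-- `Q_π(t) = ∏_{i<j, π(i)>π(j)} Q(t_i, t_j)`. -/
def Qprod {T : Type*} (n : ℕ) (Q : T → T → ℂ) (π : Equiv.Perm (Fin n)) (t : Fin n → T) : ℂ :=
  ∏ p ∈ Finset.univ.filter (fun p : Fin n × Fin n => p.1 < p.2 ∧ π p.2 < π p.1),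
    Q (t p.1) (t p.2)

/-- The number of inversions of a permutation of `Fin n`. -/
def invCount {n : ℕ} (π : Equiv.Perm (Fin n)) : ℕ :=
  (Finset.univ.filter (fun p : Fin n × Fin n => p.1 < p.2 ∧ π p.2 < π p.1)).card

/-- The adjacent transposition `(l, l+1)` in `S_{n+1}`. -/
def adjSwap (n : ℕ) (l : Fin n) : Equiv.Perm (Fin (n + 1)) :=
  Equiv.swap l.castSucc l.succ

open Equiv Finset

theorem CovBy.swap_apply_lt_swap_apply_iff {α : Type*} [LinearOrder α] {i j : α} (h : i ⋖ j)
    {x y : α} (hxy : ¬(x = i ∧ y = j)) (hyx : ¬(x = j ∧ y = i)) :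
    swap i j x < swap i j y ↔ x < y := by
  have hi : ∀ c, c < j ↔ c ≤ i := fun c => ⟨h.le_of_lt, fun hc => hc.trans_lt h.lt⟩
  have hj : ∀ c, i < c ↔ j ≤ c := fun c => ⟨h.ge_of_gt, fun hc => h.lt.trans_le hc⟩
  rw [swap_apply_def, swap_apply_def]
  split_ifs <;> grind

theorem Fin.castSucc_covBy_succ {n : ℕ} (l : Fin n) : l.castSucc ⋖ l.succ :=
  ⟨Fin.castSucc_lt_succ, fun _ h₁ h₂ => (Fin.castSucc_lt_iff_succ_le.1 h₁).not_gt h₂⟩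

namespace Equiv.Perm

variable {α : Type*} [Fintype α] [LinearOrder α]

def inversions (σ : Perm α) : Finset (α × α) := {p | p.1 < p.2 ∧ σ p.2 < σ p.1}

variable {i j : α} {σ : Perm α}

theorem mem_inversions {p : α × α} : p ∈ σ.inversions ↔ p.1 < p.2 ∧ σ p.2 < σ p.1 := by
  simp [inversions]

theorem inv_mk_notMem_inversions (hij : i < j) : (σ⁻¹ i, σ⁻¹ j) ∉ σ.inversions := by
  simp [mem_inversions, hij.le]

theorem inversions_swap_mul (h : i ⋖ j) (hσ : σ⁻¹ i < σ⁻¹ j) :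
    (swap i j * σ).inversions = insert (σ⁻¹ i, σ⁻¹ j) σ.inversions := by
  ext ⟨x, y⟩
  obtain ⟨u, rfl⟩ := σ⁻¹.surjective x
  obtain ⟨v, rfl⟩ := σ⁻¹.surjective y
  simp only [mem_insert, mem_inversions, mul_apply, coe_inv, apply_symm_apply, Prod.mk.injEq,
    σ.symm.injective.eq_iff]
  by_cases hij : u = i ∧ v = j
  · obtain ⟨rfl, rfl⟩ := hij
    simpa [h.lt] using hσ
  by_cases hji : u = j ∧ v = i
  · obtain ⟨rfl, rfl⟩ := hji
    exact iff_of_false (fun hc => hσ.not_gt hc.1)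
      (Or.rec (fun hc => h.lt.ne' hc.1) fun hc => hσ.not_gt hc.1)
  rw [h.swap_apply_lt_swap_apply_iff (by tauto) (by tauto)]
  tauto

theorem card_inversions_swap_mul (h : i ⋖ j) (hσ : σ⁻¹ i < σ⁻¹ j) :
    #(swap i j * σ).inversions = #σ.inversions + 1 := by
  rw [inversions_swap_mul h hσ, card_insert_of_notMem (inv_mk_notMem_inversions h.lt)]

theorem inv_lt_inv_of_card_inversions_swap_mul (h : i ⋖ j)
    (hσ : #(swap i j * σ).inversions = #σ.inversions + 1) : σ⁻¹ i < σ⁻¹ j := by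
  refine (le_of_not_gt fun hlt => ?_).lt_of_ne fun he => h.lt.ne (σ⁻¹.injective he)
  -- otherwise undoing the swap on `swap i j * σ` would add an inversion to it
  have hτ : (swap i j * σ)⁻¹ i < (swap i j * σ)⁻¹ j := by simpa [swap_apply_left, swap_apply_right]
  have := card_inversions_swap_mul h hτ
  rw [swap_mul_self_mul] at this
  omega

theorem prod_inversions_swap_mul {M : Type*} [CommMonoid M] (f : α × α → M) (h : i ⋖ j)
    (hσ : σ⁻¹ i < σ⁻¹ j) :
    ∏ p ∈ (swap i j * σ).inversions, f p = f (σ⁻¹ i, σ⁻¹ j) * ∏ p ∈ σ.inversions, f p := by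
  rw [inversions_swap_mul h hσ, prod_insert (inv_mk_notMem_inversions h.lt)]

end Equiv.Perm

/-- If `ρ = π_l ∘ η` is a reduced expression, then
`Q_ρ(t) = Q(t_{η⁻¹(l)}, t_{η⁻¹(l+1)}) · Q_η(t)`. -/
theorem Qprod_reduced {T : Type*} {n : ℕ} (Q : T → T → ℂ) (l : Fin n)
    (η ρ : Equiv.Perm (Fin (n + 1))) (hρ : ρ = adjSwap n l * η)
    (hred : invCount ρ = invCount η + 1) (t : Fin (n + 1) → T) :
    Qprod (n + 1) Q ρ t =
      Q (t (η⁻¹ l.castSucc)) (t (η⁻¹ l.succ)) * Qprod (n + 1) Q η t := by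
  subst hρ
  have hcov := Fin.castSucc_covBy_succ l
  have hη : η⁻¹ l.castSucc < η⁻¹ l.succ :=
    Equiv.Perm.inv_lt_inv_of_card_inversions_swap_mul hcov hred
  exact Equiv.Perm.prod_inversions_swap_mul (fun p => Q (t p.1) (t p.2)) hcov hη
end

section
/- Let T be a set and Q : T × T → ℂ. Define operators Ψ_k on functions f : T^n → ℂ by (Ψ_k f)(t_1,…,t_n) := Q(t_k, t_{k+1}) f(t_1,…,t_{k−1}, t_{k+1}, t_k, t_{k+2},…,t_n) for 1 ≤ k ≤ n−1. Then Ψ_k Ψ_l = Ψ_l Ψ_k whenever |k − l| ≥ 2, and the braid relation Ψ_k Ψ_{k+1} Ψ_k = Ψ_{k+1} Ψ_k Ψ_{k+1} holds for 1 ≤ k ≤ n−2. -/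
/-- The operator `Ψ_j` acting on functions `f : T^{n+1} → ℂ`:
`(Ψ_j f)(t₁,…,t_{n+1}) = Q(t_j, t_{j+1}) f(t₁,…,t_{j+1}, t_j,…,t_{n+1})`. -/
def Psi {T : Type*} (n : ℕ) (Q : T → T → ℂ) (j : Fin n)
    (f : (Fin (n + 1) → T) → ℂ) : (Fin (n + 1) → T) → ℂ :=
  fun t => Q (t j.castSucc) (t j.succ) * f (t ∘ Equiv.swap j.castSucc j.succ)

lemma swap_comp_comm {α : Type*} [DecidableEq α] {a b c d : α}
    (hac : a ≠ c) (had : a ≠ d) (hbc : b ≠ c) (hbd : b ≠ d) :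
    ⇑(Equiv.swap a b) ∘ ⇑(Equiv.swap c d) = ⇑(Equiv.swap c d) ∘ ⇑(Equiv.swap a b) := by
  funext x
  simp only [Function.comp_apply, Equiv.swap_apply_def]
  split_ifs <;> simp_all

/-- The operators `Ψ_k` commute if `|k - l| ≥ 2` and satisfy the braid relation
`Ψ_k Ψ_{k+1} Ψ_k = Ψ_{k+1} Ψ_k Ψ_{k+1}`. -/
theorem Psi_braid_relations {T : Type*} (n : ℕ) (Q : T → T → ℂ) :
    (∀ k l : Fin n, (k : ℕ) + 2 ≤ (l : ℕ) ∨ (l : ℕ) + 2 ≤ (k : ℕ) →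
      ∀ f : (Fin (n + 1) → T) → ℂ,
        Psi n Q k (Psi n Q l f) = Psi n Q l (Psi n Q k f)) ∧
    (∀ k : Fin n, ∀ h : (k : ℕ) + 1 < n,
      ∀ f : (Fin (n + 1) → T) → ℂ,
        Psi n Q k (Psi n Q ⟨(k : ℕ) + 1, h⟩ (Psi n Q k f)) =
          Psi n Q ⟨(k : ℕ) + 1, h⟩ (Psi n Q k (Psi n Q ⟨(k : ℕ) + 1, h⟩ f))) := by
  constructor
  · intro k l hkl f
    funext t
    set a := k.castSucc with ha
    set b := k.succ with hb
    set c := l.castSucc with hc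
    set d := l.succ with hd
    have hac : a ≠ c := by simp [ha, hc, Fin.ext_iff]; omega
    have had : a ≠ d := by simp [ha, hd, Fin.ext_iff]; omega
    have hbc : b ≠ c := by simp [hb, hc, Fin.ext_iff]; omega
    have hbd : b ≠ d := by simp [hb, hd, Fin.ext_iff]; omega
    simp only [Psi, Function.comp_apply, Function.comp_assoc]
    rw [Equiv.swap_apply_of_ne_of_ne hac.symm hbc.symm,
      Equiv.swap_apply_of_ne_of_ne had.symm hbd.symm,
      Equiv.swap_apply_of_ne_of_ne hac had,
      Equiv.swap_apply_of_ne_of_ne hbc hbd,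
      swap_comp_comm hac had hbc hbd]
    ring
  · intro k h f
    funext t
    have hcs : (⟨(k : ℕ) + 1, h⟩ : Fin n).castSucc = k.succ := by simp [Fin.ext_iff]
    simp only [Psi, hcs, Function.comp_apply, Function.comp_assoc]
    set a := k.castSucc with ha
    set b := k.succ with hb
    set c := (⟨(k : ℕ) + 1, h⟩ : Fin n).succ with hc
    have hab : a ≠ b := by simp [ha, hb, Fin.ext_iff]
    have hbc : b ≠ c := by simp [hb, hc, Fin.ext_iff]
    have hac : a ≠ c := by simp [ha, hc, Fin.ext_iff]; omega
    have key : ⇑(Equiv.swap a b) ∘ ⇑(Equiv.swap b c) ∘ ⇑(Equiv.swap a b)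
        = ⇑(Equiv.swap b c) ∘ ⇑(Equiv.swap a b) ∘ ⇑(Equiv.swap b c) := by
      have h1 : Equiv.swap a b * Equiv.swap b c * Equiv.swap a b = Equiv.swap a c := by
        rw [Equiv.swap_comm a b, Equiv.swap_comm b c,
          Equiv.swap_mul_swap_mul_swap hbc.symm hac.symm]
      have h2 : Equiv.swap b c * Equiv.swap a b * Equiv.swap b c = Equiv.swap a c := by
        rw [Equiv.swap_mul_swap_mul_swap hab hac, Equiv.swap_comm]
      calc ⇑(Equiv.swap a b) ∘ ⇑(Equiv.swap b c) ∘ ⇑(Equiv.swap a b)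
          = ⇑(Equiv.swap a b * Equiv.swap b c * Equiv.swap a b) := by
            simp [Equiv.Perm.coe_mul, Function.comp_assoc]
        _ = ⇑(Equiv.swap b c * Equiv.swap a b * Equiv.swap b c) := by rw [h1, h2]
        _ = ⇑(Equiv.swap b c) ∘ ⇑(Equiv.swap a b) ∘ ⇑(Equiv.swap b c) := by
            simp [Equiv.Perm.coe_mul, Function.comp_assoc]
    rw [key,
      Equiv.swap_apply_right a b, Equiv.swap_apply_of_ne_of_ne hac.symm hbc.symm,
      Equiv.swap_apply_of_ne_of_ne hab hac, Equiv.swap_apply_left b c,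
      Equiv.swap_apply_right b c, Equiv.swap_apply_left a b,
      Equiv.swap_apply_of_ne_of_ne hac.symm hbc.symm]
    ring
end

section
/- Let T be a set and Q : T × T → ℂ with |Q(s,t)| = 1 and Q(s,t) = conj(Q(t,s)) for all s,t. Then the map π ↦ Ψ_π, where (Ψ_π f)(t) = Q_{π^{-1}}(t) f(t_π), is a group homomorphism from S_n to the group of invertible linear operators on the space of functions T^n → ℂ: Ψ_π Ψ_ν = Ψ_{πν} for all π, ν ∈ S_n. -/
/-- `(Ψ_π f)(t) = Q_{π⁻¹}(t) f(t_π)` with `t_π = t ∘ π`. -/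
def PsiDir {T : Type*} (n : ℕ) (Q : T → T → ℂ) (π : Equiv.Perm (Fin n))
    (f : (Fin n → T) → ℂ) : (Fin n → T) → ℂ :=
  fun t => Qprod n Q π⁻¹ t * f (t ∘ π)

/-!
Writing `Q_σ(t)` as a product over all pairs `i < j`, with factor `Q(t_i, t_j)` if `σ` inverts
the pair and `1` otherwise, the identity `Ψ_π Ψ_ν = Ψ_{πν}` becomes the cocycle relation
`Q_{τσ}(t) = Q_σ(t) · Q_τ(t ∘ σ⁻¹)`. Reindexing the second product by the pair `{σ i, σ j}`
reduces it to a comparison pair by pair: a pair inverted by `σ` and then inverted back by `τ`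
contributes `Q(t_i, t_j) Q(t_j, t_i) = |Q(t_i, t_j)|² = 1`.
-/

open Finset

section LtPairs

variable {α M : Type*} [LinearOrder α]

theorem min_max_map_min_max {β : Type*} [LinearOrder β] (f : α → β) (a b : α) :
    (min (f (min a b)) (f (max a b)), max (f (min a b)) (f (max a b))) =
      (min (f a) (f b), max (f a) (f b)) := by
  rcases le_total a b with h | h <;> simp [h, min_comm, max_comm]

variable [Fintype α]

def ltPairs (α : Type*) [LinearOrder α] [Fintype α] : Finset (α × α) :=
  univ.filter fun p => p.1 < p.2

@[simp]
theorem mem_ltPairs {p : α × α} : p ∈ ltPairs α ↔ p.1 < p.2 := by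
  simp [ltPairs]

theorem prod_ltPairs_perm [CommMonoid M] (σ : Equiv.Perm α) (f : α × α → M) :
    ∏ p ∈ ltPairs α, f p = ∏ p ∈ ltPairs α, f (min (σ p.1) (σ p.2), max (σ p.1) (σ p.2)) := by
  have sort_lt {τ : Equiv.Perm α} {p : α × α} (hp : p.1 < p.2) :
      min (τ p.1) (τ p.2) < max (τ p.1) (τ p.2) :=
    min_lt_max.2 (τ.injective.ne hp.ne)
  symm
  refine prod_nbij' (fun p => (min (σ p.1) (σ p.2), max (σ p.1) (σ p.2)))
    (fun q => (min (σ⁻¹ q.1) (σ⁻¹ q.2), max (σ⁻¹ q.1) (σ⁻¹ q.2)))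
    (fun p hp => mem_ltPairs.2 (sort_lt (mem_ltPairs.1 hp)))
    (fun q hq => mem_ltPairs.2 (sort_lt (mem_ltPairs.1 hq))) ?_ ?_ fun _ _ => rfl
  · intro p hp
    rw [min_max_map_min_max]
    simp [(mem_ltPairs.1 hp).le]
  · intro q hq
    rw [min_max_map_min_max]
    simp [(mem_ltPairs.1 hq).le]

end LtPairs

section Cocycle

variable {T : Type*} {n : ℕ} {Q : T → T → ℂ}

theorem mul_swap_eq_one_of_norm_eq_one (hQ : ∀ s t : T, ‖Q s t‖ = 1)
    (hherm : ∀ s t : T, Q s t = starRingEnd ℂ (Q t s)) (s t : T) :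
    Q s t * Q t s = 1 := by
  rw [hherm t s, Complex.mul_conj, Complex.normSq_eq_norm_sq, hQ, one_pow, Complex.ofReal_one]

theorem Qprod_eq_prod_ltPairs (σ : Equiv.Perm (Fin n)) (t : Fin n → T) :
    Qprod n Q σ t = ∏ p ∈ ltPairs (Fin n), if σ p.2 < σ p.1 then Q (t p.1) (t p.2) else 1 := by
  rw [Qprod, ltPairs, ← filter_filter, prod_filter]

theorem Qprod_mul (hQ : ∀ s t : T, Q s t * Q t s = 1) (τ σ : Equiv.Perm (Fin n))
    (t : Fin n → T) :
    Qprod n Q (τ * σ) t = Qprod n Q σ t * Qprod n Q τ (t ∘ ⇑σ⁻¹) := by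
  rw [Qprod_eq_prod_ltPairs τ, prod_ltPairs_perm σ, Qprod_eq_prod_ltPairs σ,
    Qprod_eq_prod_ltPairs (τ * σ), ← prod_mul_distrib]
  refine prod_congr rfl fun p hp => ?_
  have hσ : σ p.1 ≠ σ p.2 := σ.injective.ne (mem_ltPairs.1 hp).ne
  rcases hσ.lt_or_gt with h | h
  · rw [if_neg h.not_gt, one_mul, min_eq_left h.le, max_eq_right h.le]
    simp only [Function.comp_apply, Equiv.Perm.coe_inv, Equiv.symm_apply_apply]
    -- `simp` cannot rewrite `(τ * σ) i` to `τ (σ i)` inside the `Decidable` instance of the `if`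
    rfl
  · have hτ : τ (σ p.1) ≠ τ (σ p.2) := τ.injective.ne hσ
    rcases hτ.lt_or_gt with h' | h'
    · simp [h, h.le, h', h'.not_gt, hQ]
    · simp [h, h.le, h', h'.not_gt]

end Cocycle

/-- For `Q` Hermitian with `|Q| ≡ 1` the map `π ↦ Ψ_π` is multiplicative:
`Ψ_π Ψ_ν = Ψ_{πν}`. -/
theorem PsiDir_mul {T : Type*} {n : ℕ} (Q : T → T → ℂ)
    (hQ : ∀ s t : T, ‖Q s t‖ = 1)
    (hherm : ∀ s t : T, Q s t = starRingEnd ℂ (Q t s))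
    (π ν : Equiv.Perm (Fin n)) (f : (Fin n → T) → ℂ) :
    PsiDir n Q π (PsiDir n Q ν f) = PsiDir n Q (π * ν) f := by
  funext t
  simp only [PsiDir]
  rw [mul_inv_rev, Qprod_mul (mul_swap_eq_one_of_norm_eq_one hQ hherm), inv_inv,
    Equiv.Perm.coe_mul, ← Function.comp_assoc, mul_assoc]
end
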